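/- Let A = Σ_{i=1}^k v_i ⊗ w_i with all v_i, w_i nonzero. Among all choices of positive weight vectors ρ ∈ ℝ_{>0}^k, the expected squared Frobenius error E_ν[‖A − Ã(ρ)‖_F²] of the rank-one trick estimator is minimized by ρ_i = √(‖w_i‖/‖v_i‖), and the minimal expected error equals Σ_{i≠j} (‖v_i‖‖w_i‖‖v_j‖‖w_j‖ + ⟨v_i,v_j⟩⟨w_i,w_j⟩). -/

import Mathlib

open Matrix BigOperators

noncomputable def sgn (b : Bool) : ℝ := if b then 1 else -1

noncomputable def frobSq {m n : ℕ} (M : Matrix (Fin m) (Fin n) ℝ) : ℝ :=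
  ∑ a, ∑ b, (M a b) ^ 2

/-- Euclidean norm of a vector. -/
noncomputable def enorm' {m : ℕ} (v : Fin m → ℝ) : ℝ := Real.sqrt (∑ i, (v i) ^ 2)

/-- Expected squared Frobenius error of the rank-one trick estimator, as a
function of the positive weights `ρ`. -/
noncomputable def rk1Err {m n k : ℕ} (v : Fin k → Fin m → ℝ) (w : Fin k → Fin n → ℝ)
    (A : Matrix (Fin m) (Fin n) ℝ) (ρ : Fin k → ℝ) : ℝ :=
  ((2 : ℝ) ^ k)⁻¹ *
    ∑ σ : Fin k → Bool,
      frobSq (A -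
        vecMulVec (∑ i, (ρ i * sgn (σ i)) • v i) (∑ i, (sgn (σ i) / ρ i) • w i))

open Finset

section Aux

lemma sgn_mul_self (b : Bool) : sgn b * sgn b = 1 := by cases b <;> simp [sgn]

lemma sgn_pow (b : Bool) (e : ℕ) : sgn b ^ e = if Even e then 1 else sgn b := by
  rcases Nat.even_or_odd e with h | h
  · cases b <;> simp [sgn, h, h.neg_one_pow]
  · cases b <;> simp [sgn, Nat.not_even_iff_odd.mpr h, h.neg_one_pow]

lemma single_as_prod {k : ℕ} (x : Fin k → ℝ) (i : Fin k) :
    x i = ∏ t, x t ^ (if t = i then 1 else 0) := by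
  rw [Finset.prod_eq_single i] <;> simp +contextual

lemma four_as_prod {k : ℕ} (x : Fin k → ℝ) (i j l r : Fin k) :
    x i * x j * (x l * x r) = ∏ t, x t ^
      ((if t = i then 1 else 0) + (if t = j then 1 else 0) +
       (if t = l then 1 else 0) + (if t = r then 1 else 0)) := by
  simp only [pow_add, Finset.prod_mul_distrib, ← single_as_prod]
  ring

lemma sum_sgn_four {k : ℕ} (i j l r : Fin k) (hij : i ≠ j) (hlr : l ≠ r) :
    ∑ σ : Fin k → Bool, sgn (σ i) * sgn (σ j) * (sgn (σ l) * sgn (σ r)) =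
    if (l = i ∧ r = j) ∨ (l = j ∧ r = i) then (2:ℝ)^k else 0 := by
  set e : Fin k → ℕ := fun t =>
      (if t = i then 1 else 0) + (if t = j then 1 else 0) +
       (if t = l then 1 else 0) + (if t = r then 1 else 0) with he
  have h1 : ∀ σ : Fin k → Bool, sgn (σ i) * sgn (σ j) * (sgn (σ l) * sgn (σ r)) =
      ∏ t, sgn (σ t) ^ e t := fun σ => four_as_prod (fun t => sgn (σ t)) i j l r
  simp only [h1]
  have hs : ∑ σ : Fin k → Bool, ∏ t, sgn (σ t) ^ e t =
      ∏ t : Fin k, ∑ b : Bool, sgn b ^ e t := by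
    rw [Finset.prod_univ_sum (fun _ => (univ : Finset Bool)) (fun t b => sgn b ^ e t),
      Fintype.piFinset_univ]
  rw [hs]
  have h3 : ∀ t, (∑ b : Bool, sgn b ^ e t) = if Even (e t) then 2 else 0 := by
    intro t
    rcases Nat.even_or_odd (e t) with h | h
    · simp [Fintype.sum_bool, sgn_pow, sgn, h]
    · simp [Fintype.sum_bool, sgn_pow, sgn, Nat.not_even_iff_odd.mpr h, h.neg_one_pow]
  simp only [h3]
  by_cases hc : (l = i ∧ r = j) ∨ (l = j ∧ r = i)
  · rw [if_pos hc]
    have hall : ∀ t, Even (e t) := by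
      intro t
      rcases hc with ⟨rfl, rfl⟩ | ⟨rfl, rfl⟩ <;>
        simp only [he] <;> split <;> split <;> simp_all
    simp [hall]
  · rw [if_neg hc]
    push_neg at hc
    have : ∃ t, ¬ Even (e t) := by
      by_contra hall
      push_neg at hall
      have hi := hall i
      have hj := hall j
      have hl := hall l
      have hr := hall r
      simp only [he] at hi hj hl hr
      by_cases h1 : l = i <;> by_cases h2 : r = j <;> by_cases h3 : l = j <;>
        by_cases h4 : r = i <;> simp_all [Nat.even_add, Nat.even_iff]
    obtain ⟨t, ht⟩ := this
    exact Finset.prod_eq_zero (Finset.mem_univ t) (by simp [ht])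

lemma sum_offDiag_eq {k : ℕ} {β : Type*} [AddCommMonoid β] (f : Fin k × Fin k → β) :
    ∑ p ∈ (univ : Finset (Fin k)).offDiag, f p
      = ∑ i, ∑ j ∈ univ.filter (· ≠ i), f (i, j) := by
  rw [show (univ : Finset (Fin k)).offDiag = (univ ×ˢ univ).filter (fun a => a.1 ≠ a.2) from by
    ext p; simp [Finset.mem_offDiag], Finset.sum_filter, Finset.sum_product]
  simp [Finset.sum_filter, eq_comm, ne_comm]

lemma expect_sq {k : ℕ} (g : Fin k × Fin k → ℝ) :
    ∑ σ : Fin k → Bool,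
        (∑ p ∈ (univ : Finset (Fin k)).offDiag, sgn (σ p.1) * sgn (σ p.2) * g p) ^ 2
      = 2 ^ k * ∑ p ∈ (univ : Finset (Fin k)).offDiag, (g p ^ 2 + g p * g p.swap) := by
  have hmem : ∀ p : Fin k × Fin k, p ∈ (univ : Finset (Fin k)).offDiag ↔ p.1 ≠ p.2 := by
    simp [Finset.mem_offDiag]
  calc ∑ σ : Fin k → Bool,
        (∑ p ∈ (univ : Finset (Fin k)).offDiag, sgn (σ p.1) * sgn (σ p.2) * g p) ^ 2
      = ∑ σ : Fin k → Bool, ∑ p ∈ (univ : Finset (Fin k)).offDiag,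
          ∑ q ∈ (univ : Finset (Fin k)).offDiag,
            (sgn (σ p.1) * sgn (σ p.2) * (sgn (σ q.1) * sgn (σ q.2))) * (g p * g q) := by
        refine Finset.sum_congr rfl fun σ _ => ?_
        rw [sq, Finset.sum_mul_sum]
        exact Finset.sum_congr rfl fun p _ => Finset.sum_congr rfl fun q _ => by ring
    _ = ∑ p ∈ (univ : Finset (Fin k)).offDiag, ∑ q ∈ (univ : Finset (Fin k)).offDiag,
          (∑ σ : Fin k → Bool, sgn (σ p.1) * sgn (σ p.2) * (sgn (σ q.1) * sgn (σ q.2)))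
            * (g p * g q) := by
        rw [Finset.sum_comm]
        refine Finset.sum_congr rfl fun p _ => ?_
        rw [Finset.sum_comm]
        exact Finset.sum_congr rfl fun q _ => by rw [Finset.sum_mul]
    _ = ∑ p ∈ (univ : Finset (Fin k)).offDiag, ∑ q ∈ (univ : Finset (Fin k)).offDiag,
          ((if q = p then (2:ℝ)^k * (g p * g q) else 0) +
           (if q = p.swap then (2:ℝ)^k * (g p * g q) else 0)) := by
        refine Finset.sum_congr rfl fun p hp => Finset.sum_congr rfl fun q hq => ?_
        rw [sum_sgn_four p.1 p.2 q.1 q.2 ((hmem p).mp hp) ((hmem q).mp hq)]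
        have hps : p ≠ p.swap := by
          intro h
          exact (hmem p).mp hp (congrArg Prod.fst h ▸ rfl)
        by_cases h1 : q = p <;> by_cases h2 : q = p.swap
        · exact absurd (h1 ▸ h2) hps
        · subst h1; simp [Prod.ext_iff, ((hmem q).mp hq).symm]
        · subst h2; simp [Prod.ext_iff, hps, ((hmem p).mp hp)]
        · have : ¬((q.1 = p.1 ∧ q.2 = p.2) ∨ (q.1 = p.2 ∧ q.2 = p.1)) := by
            rintro (⟨a, b⟩ | ⟨a, b⟩)
            · exact h1 (Prod.ext a b)
            · exact h2 (Prod.ext a b)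
          simp [this, h1, h2]
    _ = 2 ^ k * ∑ p ∈ (univ : Finset (Fin k)).offDiag, (g p ^ 2 + g p * g p.swap) := by
        rw [Finset.mul_sum]
        refine Finset.sum_congr rfl fun p hp => ?_
        rw [Finset.sum_add_distrib, Finset.sum_ite_eq' _ p, Finset.sum_ite_eq' _ p.swap,
          if_pos hp, if_pos]
        · ring
        · rw [hmem]
          exact (Ne.symm ((hmem p).mp hp))

lemma entry_eq {m n k : ℕ} (v : Fin k → Fin m → ℝ) (w : Fin k → Fin n → ℝ)
    (ρ : Fin k → ℝ) (hρ : ∀ i, ρ i ≠ 0) (σ : Fin k → Bool) (a : Fin m) (b : Fin n) :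
    ((∑ i, vecMulVec (v i) (w i)) -
        vecMulVec (∑ i, (ρ i * sgn (σ i)) • v i) (∑ i, (sgn (σ i) / ρ i) • w i)) a b
    = - ∑ p ∈ (univ : Finset (Fin k)).offDiag,
        sgn (σ p.1) * sgn (σ p.2) * (ρ p.1 / ρ p.2 * (v p.1 a * w p.2 b)) := by
  have h1 : ((∑ i, vecMulVec (v i) (w i)) -
        vecMulVec (∑ i, (ρ i * sgn (σ i)) • v i) (∑ i, (sgn (σ i) / ρ i) • w i)) a b
      = ∑ i, v i a * w i b -
        (∑ i, ρ i * sgn (σ i) * v i a) * (∑ j, sgn (σ j) / ρ j * w j b) := by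
    simp [Matrix.sub_apply, Matrix.sum_apply, vecMulVec_apply, Finset.sum_apply]
  rw [h1, Finset.sum_mul_sum]
  have h2 : ∑ i, ∑ j, (ρ i * sgn (σ i) * v i a) * (sgn (σ j) / ρ j * w j b)
      = ∑ q ∈ (univ : Finset (Fin k)) ×ˢ univ,
          (ρ q.1 * sgn (σ q.1) * v q.1 a) * (sgn (σ q.2) / ρ q.2 * w q.2 b) := by
    rw [Finset.sum_product]
  rw [h2, ← Finset.diag_union_offDiag (univ : Finset (Fin k)),
    Finset.sum_union (Finset.disjoint_diag_offDiag _), Finset.sum_diag]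
  have h3 : ∀ i : Fin k, (ρ i * sgn (σ i) * v i a) * (sgn (σ i) / ρ i * w i b)
      = v i a * w i b := by
    intro i
    have e : ρ i * sgn (σ i) * v i a * (sgn (σ i) / ρ i * w i b)
        = (sgn (σ i) * sgn (σ i)) * (ρ i / ρ i) * (v i a * w i b) := by ring
    rw [e, sgn_mul_self, div_self (hρ i)]; ring
  simp only [h3]
  rw [show ∀ X Y : ℝ, X - (X + Y) = -Y from fun X Y => by ring]
  rw [neg_inj]
  exact Finset.sum_congr rfl fun p _ => by ring

lemma double_sum_fact {m n : ℕ} (f1 f2 : Fin m → ℝ) (g1 g2 : Fin n → ℝ) (c : ℝ) :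
    ∑ y : Fin n, ∑ x : Fin m, c * (f1 x * f2 x) * (g1 y * g2 y)
      = c * ((∑ x, f1 x * f2 x) * (∑ y, g1 y * g2 y)) := by
  rw [Finset.sum_comm, Finset.sum_mul_sum]
  simp only [Finset.mul_sum]
  exact Finset.sum_congr rfl fun x _ => Finset.sum_congr rfl fun y _ => by ring

lemma rk1Err_formula {m n k : ℕ} (v : Fin k → Fin m → ℝ) (w : Fin k → Fin n → ℝ)
    (A : Matrix (Fin m) (Fin n) ℝ) (hA : A = ∑ i, vecMulVec (v i) (w i))
    (ρ : Fin k → ℝ) (hρ : ∀ i, ρ i ≠ 0) :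
    rk1Err v w A ρ = ∑ p ∈ (univ : Finset (Fin k)).offDiag,
      ((ρ p.1 / ρ p.2) ^ 2 * ((v p.1 ⬝ᵥ v p.1) * (w p.2 ⬝ᵥ w p.2)) +
        (v p.1 ⬝ᵥ v p.2) * (w p.1 ⬝ᵥ w p.2)) := by
  subst hA
  unfold rk1Err frobSq
  have hentry : ∀ (σ : Fin k → Bool) (a : Fin m) (b : Fin n),
      (((∑ i, vecMulVec (v i) (w i)) -
        vecMulVec (∑ i, (ρ i * sgn (σ i)) • v i) (∑ i, (sgn (σ i) / ρ i) • w i)) a b) ^ 2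
      = (∑ p ∈ (univ : Finset (Fin k)).offDiag,
          sgn (σ p.1) * sgn (σ p.2) * (ρ p.1 / ρ p.2 * (v p.1 a * w p.2 b))) ^ 2 := by
    intro σ a b
    rw [entry_eq v w ρ hρ σ a b, neg_sq]
  simp only [hentry]
  rw [Finset.sum_comm]
  have hswap : ∀ a : Fin m,
      ∑ σ : Fin k → Bool, ∑ b : Fin n,
          (∑ p ∈ (univ : Finset (Fin k)).offDiag,
            sgn (σ p.1) * sgn (σ p.2) * (ρ p.1 / ρ p.2 * (v p.1 a * w p.2 b))) ^ 2
        = ∑ b : Fin n, (2:ℝ) ^ k * ∑ p ∈ (univ : Finset (Fin k)).offDiag,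
            ((ρ p.1 / ρ p.2 * (v p.1 a * w p.2 b)) ^ 2 +
             (ρ p.1 / ρ p.2 * (v p.1 a * w p.2 b)) *
               (ρ p.swap.1 / ρ p.swap.2 * (v p.swap.1 a * w p.swap.2 b))) := by
    intro a
    rw [Finset.sum_comm]
    exact Finset.sum_congr rfl fun b _ =>
      expect_sq (fun p => ρ p.1 / ρ p.2 * (v p.1 a * w p.2 b))
  simp only [hswap, ← Finset.mul_sum]
  rw [← mul_assoc, inv_mul_cancel₀ (by positivity : ((2:ℝ)^k) ≠ 0), one_mul]
  rw [Finset.sum_comm]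
  have hcomm : ∀ _ : Unit, (∑ y : Fin n, ∑ x : Fin m, ∑ p ∈ (univ : Finset (Fin k)).offDiag,
      ((ρ p.1 / ρ p.2 * (v p.1 x * w p.2 y)) ^ 2 +
        ρ p.1 / ρ p.2 * (v p.1 x * w p.2 y) *
          (ρ p.swap.1 / ρ p.swap.2 * (v p.swap.1 x * w p.swap.2 y))))
      = ∑ p ∈ (univ : Finset (Fin k)).offDiag, ∑ y : Fin n, ∑ x : Fin m,
      ((ρ p.1 / ρ p.2 * (v p.1 x * w p.2 y)) ^ 2 +
        ρ p.1 / ρ p.2 * (v p.1 x * w p.2 y) *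
          (ρ p.swap.1 / ρ p.swap.2 * (v p.swap.1 x * w p.swap.2 y))) := by
    intro _
    rw [Finset.sum_congr rfl fun y _ => Finset.sum_comm (s := (univ : Finset (Fin m)))
      (t := (univ : Finset (Fin k)).offDiag)
      (f := fun x p => ((ρ p.1 / ρ p.2 * (v p.1 x * w p.2 y)) ^ 2 +
        ρ p.1 / ρ p.2 * (v p.1 x * w p.2 y) *
          (ρ p.swap.1 / ρ p.swap.2 * (v p.swap.1 x * w p.swap.2 y))))]
    exact Finset.sum_comm
  rw [hcomm ()]
  refine Finset.sum_congr rfl fun p hp => ?_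
  have h12 : p.1 ≠ p.2 := (Finset.mem_offDiag.mp hp).2.2
  simp only [Prod.fst_swap, Prod.snd_swap]
  have e : ∀ (x : Fin m) (y : Fin n),
      (ρ p.1 / ρ p.2 * (v p.1 x * w p.2 y)) ^ 2 +
        ρ p.1 / ρ p.2 * (v p.1 x * w p.2 y) * (ρ p.2 / ρ p.1 * (v p.2 x * w p.1 y))
      = (ρ p.1 / ρ p.2) ^ 2 * (v p.1 x * v p.1 x) * (w p.2 y * w p.2 y) +
        1 * (v p.1 x * v p.2 x) * (w p.1 y * w p.2 y) := by
    intro x y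
    have h1 := hρ p.1
    have h2 := hρ p.2
    field_simp
  simp only [e]
  simp only [Finset.sum_add_distrib]
  rw [double_sum_fact, double_sum_fact, one_mul]
  simp only [dotProduct]

lemma enorm_nonneg {m : ℕ} (v : Fin m → ℝ) : 0 ≤ enorm' v := Real.sqrt_nonneg _

lemma enorm'_pos {m : ℕ} (v : Fin m → ℝ) (hv : v ≠ 0) : 0 < enorm' v := by
  apply Real.sqrt_pos.mpr
  rcases Function.ne_iff.mp hv with ⟨i, hi⟩
  have hi' : v i ≠ 0 := by simpa using hi
  have : (0:ℝ) < v i ^ 2 := by positivity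
  exact Finset.sum_pos' (fun j _ => sq_nonneg _) ⟨i, Finset.mem_univ i, this⟩

lemma dot_self_eq {m : ℕ} (v : Fin m → ℝ) : v ⬝ᵥ v = enorm' v ^ 2 := by
  rw [enorm', Real.sq_sqrt (by positivity)]
  simp [dotProduct, sq]

end Aux

/-- Variance minimization for the rank-one trick: the choice
`ρ i = √(‖w i‖ / ‖v i‖)` minimizes the expected squared Frobenius error among
all positive weight vectors, and the minimal error equals
`∑_{i ≠ j} (‖v i‖‖w i‖‖v j‖‖w j‖ + ⟨v i, v j⟩⟨w i, w j⟩)`. -/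
theorem rank_one_trick_variance_min (m n k : ℕ)
    (v : Fin k → Fin m → ℝ) (w : Fin k → Fin n → ℝ)
    (hv : ∀ i, v i ≠ 0) (hw : ∀ i, w i ≠ 0)
    (A : Matrix (Fin m) (Fin n) ℝ)
    (hA : A = ∑ i, vecMulVec (v i) (w i))
    (ρstar : Fin k → ℝ)
    (hρstar : ∀ i, ρstar i = Real.sqrt (enorm' (w i) / enorm' (v i))) :
    (∀ ρ : Fin k → ℝ, (∀ i, 0 < ρ i) → rk1Err v w A ρstar ≤ rk1Err v w A ρ) ∧
      rk1Err v w A ρstar =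
        ∑ i, ∑ j ∈ Finset.univ.filter (· ≠ i),
          (enorm' (v i) * enorm' (w i) * enorm' (v j) * enorm' (w j) +
            (v i ⬝ᵥ v j) * (w i ⬝ᵥ w j)) := by
  have hvpos : ∀ i, 0 < enorm' (v i) := fun i => enorm'_pos _ (hv i)
  have hwpos : ∀ i, 0 < enorm' (w i) := fun i => enorm'_pos _ (hw i)
  have hρs : ∀ i, 0 < ρstar i := by
    intro i; rw [hρstar i]; exact Real.sqrt_pos.mpr (div_pos (hwpos i) (hvpos i))
  have hρsne : ∀ i, ρstar i ≠ 0 := fun i => (hρs i).ne'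
  have hterm : ∀ p : Fin k × Fin k,
      (ρstar p.1 / ρstar p.2) ^ 2 * ((v p.1 ⬝ᵥ v p.1) * (w p.2 ⬝ᵥ w p.2))
      = enorm' (v p.1) * enorm' (w p.1) * enorm' (v p.2) * enorm' (w p.2) := by
    intro p
    rw [div_pow, hρstar p.1, hρstar p.2,
      Real.sq_sqrt (le_of_lt (div_pos (hwpos p.1) (hvpos p.1))),
      Real.sq_sqrt (le_of_lt (div_pos (hwpos p.2) (hvpos p.2))),
      dot_self_eq, dot_self_eq]
    have h1 := hvpos p.1
    have h2 := hvpos p.2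
    have h3 := hwpos p.1
    have h4 := hwpos p.2
    field_simp
  have hmain : rk1Err v w A ρstar = ∑ p ∈ (univ : Finset (Fin k)).offDiag,
      (enorm' (v p.1) * enorm' (w p.1) * enorm' (v p.2) * enorm' (w p.2) +
        (v p.1 ⬝ᵥ v p.2) * (w p.1 ⬝ᵥ w p.2)) := by
    rw [rk1Err_formula v w A hA ρstar hρsne]
    exact Finset.sum_congr rfl fun p _ => by rw [hterm p]
  constructor
  · intro ρ hρ
    have hρne : ∀ i, ρ i ≠ 0 := fun i => (hρ i).ne'
    rw [hmain, rk1Err_formula v w A hA ρ hρne]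
    set f : Fin k × Fin k → ℝ := fun p =>
      (ρ p.1 / ρ p.2) ^ 2 * ((v p.1 ⬝ᵥ v p.1) * (w p.2 ⬝ᵥ w p.2)) +
        (v p.1 ⬝ᵥ v p.2) * (w p.1 ⬝ᵥ w p.2) with hf
    set g : Fin k × Fin k → ℝ := fun p =>
      enorm' (v p.1) * enorm' (w p.1) * enorm' (v p.2) * enorm' (w p.2) +
        (v p.1 ⬝ᵥ v p.2) * (w p.1 ⬝ᵥ w p.2) with hg
    have hswapsum : ∑ p ∈ (univ : Finset (Fin k)).offDiag, f p.swap
        = ∑ p ∈ (univ : Finset (Fin k)).offDiag, f p := by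
      refine Finset.sum_equiv (Equiv.prodComm (Fin k) (Fin k)) ?_ ?_
      · intro p
        simp only [Finset.mem_offDiag, Finset.mem_univ, true_and, Equiv.prodComm_apply,
          Prod.fst_swap, Prod.snd_swap]
        exact ne_comm
      · intro p _
        rfl
    have key : ∀ p ∈ (univ : Finset (Fin k)).offDiag, 2 * g p ≤ f p + f p.swap := by
      intro p _
      simp only [hf, hg, Prod.fst_swap, Prod.snd_swap]
      rw [dot_self_eq, dot_self_eq, dot_self_eq, dot_self_eq]
      have hcross : v p.2 ⬝ᵥ v p.1 * w p.2 ⬝ᵥ w p.1 = v p.1 ⬝ᵥ v p.2 * w p.1 ⬝ᵥ w p.2 := by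
        rw [dotProduct_comm (v p.2), dotProduct_comm (w p.2)]
      have h1 := hvpos p.1
      have h2 := hvpos p.2
      have h3 := hwpos p.1
      have h4 := hwpos p.2
      have hr1 := hρ p.1
      have hr2 := hρ p.2
      have htt : (ρ p.1 / ρ p.2) * (ρ p.2 / ρ p.1) = 1 := by field_simp
      nlinarith [sq_nonneg ((ρ p.1 / ρ p.2) * (enorm' (v p.1) * enorm' (w p.2)) -
          (ρ p.2 / ρ p.1) * (enorm' (v p.2) * enorm' (w p.1))),
        htt, hcross, mul_pos (mul_pos h1 h4) (mul_pos h2 h3)]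
    have hfinal : 2 * ∑ p ∈ (univ : Finset (Fin k)).offDiag, g p
        ≤ 2 * ∑ p ∈ (univ : Finset (Fin k)).offDiag, f p := by
      rw [Finset.mul_sum]
      calc ∑ p ∈ (univ : Finset (Fin k)).offDiag, 2 * g p
          ≤ ∑ p ∈ (univ : Finset (Fin k)).offDiag, (f p + f p.swap) :=
            Finset.sum_le_sum key
        _ = ∑ p ∈ (univ : Finset (Fin k)).offDiag, f p
            + ∑ p ∈ (univ : Finset (Fin k)).offDiag, f p.swap := Finset.sum_add_distrib
        _ = 2 * ∑ p ∈ (univ : Finset (Fin k)).offDiag, f p := by rw [hswapsum]; ring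
    linarith
  · rw [hmain, sum_offDiag_eq]
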